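/- arXiv:1504.00640 — 6 statements merged into one kernel-verified Lean document; each statement's English description precedes it below -/
import Mathlib

section
/- For every bounded random variable ξ on an atomless probability space (Ω, F, P) and every α ∈ (0,1), the Entropic Value at Risk satisfies the dual representation e_α(ξ) = inf { E_Q[ξ] : Q a probability measure absolutely continuous with respect to P with relative entropy H(Q|P) ≤ -log α }. -/
/-!
Write `β = -log α > 0` and let `Q_z = P.tilted (-z * ξ ·)` be the Gibbs measure with density
`exp (-z ξ) / E[exp (-z ξ)]`. For every `Q ≪ P` of finite entropy the chain rule for relative
entropy gives `H(Q | Q_z) = H(Q | P) + z E_Q[ξ] + log E[exp (-z ξ)]`, so Gibbs' inequality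
`H(Q | Q_z) ≥ 0` and `H(Q | P) ≤ β` give `-(1/z) log (E[exp (-z ξ)] / α) ≤ E_Q[ξ]`.

Conversely, with `κ` the cumulant generating function of `ξ`, `E_{Q_z}[ξ] = κ'(-z)` and
`h(z) := H(Q_z | P) = -z κ'(-z) - κ(-z)`, whence
`E_{Q_z}[ξ] = -(1/z) log (E[exp (-z ξ)] / α) + (β - h(z)) / z`.
Since `ξ` is bounded, `κ` is analytic on `ℝ`, so `h` is continuous with `h(0) = 0`. Either
`h` reaches `β`, and the intermediate value theorem gives a feasible `Q_z` with no gap, or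
`h < β` everywhere, every `Q_z` is feasible and the gap is at most `β / z → 0`.
-/

open MeasureTheory

/-- The integrand `(dQ/dP) log (dQ/dP)` of the relative entropy `H(Q|P)`. -/
noncomputable def entIntegrand {Ω : Type*} [MeasurableSpace Ω] (Q P : Measure Ω) (ω : Ω) : ℝ :=
  (Q.rnDeriv P ω).toReal * Real.log (Q.rnDeriv P ω).toReal

/-- `H(Q|P) ≤ β`, where the relative entropy `H(Q|P) = E_P[(dQ/dP) log (dQ/dP)]` is
understood to be `+∞` (hence `> β`) when the integrand is not integrable. -/
def EntropyLE {Ω : Type*} [MeasurableSpace Ω] (Q P : Measure Ω) (β : ℝ) : Prop :=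
  Integrable (entIntegrand Q P) P ∧ ∫ ω, entIntegrand Q P ω ∂P ≤ β

open ProbabilityTheory InformationTheory Real Set

section

variable {Ω : Type*} [MeasurableSpace Ω] {P Q : Measure Ω}

lemma entropyLE_iff [SigmaFinite P] [SigmaFinite Q] (hQP : Q ≪ P) {β : ℝ} :
    EntropyLE Q P β ↔ Integrable (llr Q P) Q ∧ ∫ ω, llr Q P ω ∂Q ≤ β :=
  and_congr (integrable_rnDeriv_mul_log_iff hQP) (by rw [← integral_rnDeriv_mul_log hQP]; rfl)

lemma entropyLE_self [SigmaFinite P] {β : ℝ} (hβ : 0 ≤ β) : EntropyLE P P β := by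
  rw [entropyLE_iff .rfl, integrable_congr (llr_self P), integral_congr_ae (llr_self P)]
  exact ⟨integrable_zero _ _ _, by simpa using hβ⟩

lemma integral_llr_nonneg [IsProbabilityMeasure P] [IsProbabilityMeasure Q] (hQP : Q ≪ P)
    (hllr : Integrable (llr Q P) Q) : 0 ≤ ∫ ω, llr Q P ω ∂Q := by
  simpa using integral_llr_add_sub_measure_univ_nonneg hQP hllr

variable [IsProbabilityMeasure P] {ξ : Ω → ℝ} {t : ℝ}

lemma mul_integral_le_integral_llr_add_cgf [IsProbabilityMeasure Q] (hQP : Q ≪ P)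
    (hllr : Integrable (llr Q P) Q) (hξ : Integrable ξ Q)
    (ht : Integrable (fun ω ↦ exp (t * ξ ω)) P) :
    t * ∫ ω, ξ ω ∂Q ≤ ∫ ω, llr Q P ω ∂Q + cgf ξ P t := by
  have : IsProbabilityMeasure (P.tilted (t * ξ ·)) := isProbabilityMeasure_tilted ht
  have hgap := integral_llr_nonneg (hQP.trans (absolutelyContinuous_tilted ht))
    (integrable_llr_tilted_right hQP (hξ.const_mul t) hllr ht)
  rw [integral_llr_tilted_right hQP (hξ.const_mul t) ht hllr, integral_const_mul] at hgap
  rw [cgf, mgf]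
  linarith

lemma llr_tilted_mul_self_ae (ht : Integrable (fun ω ↦ exp (t * ξ ω)) P) :
    llr (P.tilted (t * ξ ·)) P =ᵐ[P.tilted (t * ξ ·)] fun ω ↦ t * ξ ω - cgf ξ P t :=
  (tilted_absolutelyContinuous P _).ae_le (log_rnDeriv_tilted_left_self ht)

lemma integrable_llr_tilted_mul_self (ht : Integrable (fun ω ↦ exp (t * ξ ω)) P)
    (hξ : Integrable ξ (P.tilted (t * ξ ·))) :
    Integrable (llr (P.tilted (t * ξ ·)) P) (P.tilted (t * ξ ·)) := by
  have : IsProbabilityMeasure (P.tilted (t * ξ ·)) := isProbabilityMeasure_tilted ht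
  rw [integrable_congr (llr_tilted_mul_self_ae ht)]
  exact (hξ.const_mul t).sub (integrable_const _)

lemma integral_llr_tilted_mul_self (ht : Integrable (fun ω ↦ exp (t * ξ ω)) P)
    (hξ : Integrable ξ (P.tilted (t * ξ ·))) :
    ∫ ω, llr (P.tilted (t * ξ ·)) P ω ∂(P.tilted (t * ξ ·))
      = t * (P.tilted (t * ξ ·))[ξ] - cgf ξ P t := by
  have : IsProbabilityMeasure (P.tilted (t * ξ ·)) := isProbabilityMeasure_tilted ht
  rw [integral_congr_ae (llr_tilted_mul_self_ae ht), integral_sub (hξ.const_mul t)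
    (integrable_const _), integral_const_mul, integral_const, probReal_univ, one_smul]

end

section Bounded

variable {Ω : Type*} [MeasurableSpace Ω] {P Q : Measure Ω} {ξ : Ω → ℝ} {C : ℝ}

lemma integrable_exp_mul_of_abs_le [IsFiniteMeasure P] (hξ : AEMeasurable ξ P)
    (hC : ∀ᵐ ω ∂P, |ξ ω| ≤ C) (t : ℝ) : Integrable (fun ω ↦ exp (t * ξ ω)) P :=
  integrable_exp_mul_of_mem_Icc hξ (hC.mono fun _ ↦ abs_le.mp)

lemma integrable_of_abs_le_of_absolutelyContinuous [IsFiniteMeasure Q] (hQP : Q ≪ P)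
    (hξ : AEStronglyMeasurable ξ Q) (hC : ∀ᵐ ω ∂P, |ξ ω| ≤ C) : Integrable ξ Q :=
  .of_bound hξ C (hQP.ae_le hC)

lemma interior_integrableExpSet_eq_univ (hexp : ∀ t, Integrable (fun ω ↦ exp (t * ξ ω)) P) :
    interior (integrableExpSet ξ P) = univ := by
  rw [interior_eq_univ, eq_univ_iff_forall]; exact hexp

lemma continuous_mul_deriv_cgf_sub_cgf (hexp : ∀ t, Integrable (fun ω ↦ exp (t * ξ ω)) P) :
    Continuous fun t ↦ t * deriv (cgf ξ P) t - cgf ξ P t := by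
  have hκ : AnalyticOnNhd ℝ (cgf ξ P) univ :=
    interior_integrableExpSet_eq_univ hexp ▸ analyticOnNhd_cgf
  exact (continuous_id.mul (continuousOn_univ.mp hκ.deriv.continuousOn)).sub
    (continuousOn_univ.mp hκ.continuousOn)

end Bounded

lemma exists_pos_le_and_sub_div_le {h : ℝ → ℝ} (hcont : Continuous h) (h0 : h 0 = 0)
    (hnn : ∀ z, 0 < z → 0 ≤ h z) {β ε : ℝ} (hβ : 0 < β) (hε : 0 < ε) :
    ∃ z, 0 < z ∧ h z ≤ β ∧ (β - h z) / z ≤ ε := by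
  by_cases hall : ∀ z, 0 < z → h z ≤ β
  · refine ⟨β / ε, by positivity, hall _ (by positivity), ?_⟩
    calc (β - h (β / ε)) / (β / ε) ≤ β / (β / ε) := by
          gcongr; linarith [hnn (β / ε) (by positivity)]
      _ = ε := by field_simp
  · push Not at hall
    obtain ⟨z₀, hz₀, hβz₀⟩ := hall
    obtain ⟨z, hz, hzβ⟩ := intermediate_value_Icc hz₀.le hcont.continuousOn
      ⟨by rw [h0]; exact hβ.le, hβz₀.le⟩
    have hz0 : z ≠ 0 := by rintro rfl; linarith
    exact ⟨z, lt_of_le_of_ne hz.1 (Ne.symm hz0), hzβ.le, by simp [hzβ, hε.le]⟩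

lemma csSup_eq_csInf_of_forall_le_of_forall_exists_le_add {S T : Set ℝ} (hS : S.Nonempty)
    (hT : T.Nonempty) (hle : ∀ y ∈ S, ∀ x ∈ T, y ≤ x)
    (happrox : ∀ ε > 0, ∃ x ∈ T, ∃ y ∈ S, x ≤ y + ε) : sSup S = sInf T := by
  refine le_antisymm (csSup_le hS fun y hy ↦ le_csInf hT (hle y hy)) ?_
  refine le_of_forall_pos_le_add fun ε hε ↦ ?_
  obtain ⟨x, hx, y, hy, hxy⟩ := happrox ε hε
  obtain ⟨x₀, hx₀⟩ := hT
  obtain ⟨y₀, hy₀⟩ := hS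
  calc sInf T ≤ x := csInf_le ⟨y₀, fun x hx ↦ hle y₀ hy₀ x hx⟩ hx
    _ ≤ y + ε := hxy
    _ ≤ sSup S + ε := by gcongr; exact le_csSup ⟨x₀, fun y hy ↦ hle y hy x₀ hx₀⟩ hy

section EVaR

variable {Ω : Type*} [MeasurableSpace Ω] {P Q : Measure Ω} [IsProbabilityMeasure P]
  {ξ : Ω → ℝ} {α : ℝ}

lemma neg_inv_mul_log_mgf_div_le_integral [IsProbabilityMeasure Q] (hQP : Q ≪ P) (hα : 0 < α)
    (hent : EntropyLE Q P (-log α)) (hξ : Integrable ξ Q) {z : ℝ} (hz : 0 < z)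
    (hexp : Integrable (fun ω ↦ exp (-z * ξ ω)) P) :
    -(1 / z) * log (mgf ξ P (-z) / α) ≤ ∫ ω, ξ ω ∂Q := by
  obtain ⟨hllr, hH⟩ := (entropyLE_iff hQP).mp hent
  have hdv := mul_integral_le_integral_llr_add_cgf hQP hllr hξ hexp
  have hκ : log (mgf ξ P (-z)) = cgf ξ P (-z) := rfl
  rw [log_div (mgf_pos hexp).ne' hα.ne', hκ, neg_mul, neg_le, one_div_mul_eq_div, le_div_iff₀ hz]
  linarith

lemma exists_entropyLE_tilted_integral_le {C ε : ℝ} (hξ : Measurable ξ) (hC : ∀ᵐ ω ∂P, |ξ ω| ≤ C)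
    (hα : α ∈ Ioo 0 1) (hε : 0 < ε) :
    ∃ z, 0 < z ∧ EntropyLE (P.tilted (-z * ξ ·)) P (-log α) ∧
      (P.tilted (-z * ξ ·))[ξ] ≤ -(1 / z) * log (mgf ξ P (-z) / α) + ε := by
  have hexp := integrable_exp_mul_of_abs_le hξ.aemeasurable hC
  have hint (t : ℝ) : Integrable ξ (P.tilted (t * ξ ·)) :=
    integrable_of_abs_le_of_absolutelyContinuous (tilted_absolutelyContinuous P _)
      hξ.aestronglyMeasurable hC
  have hmean (t : ℝ) : (P.tilted (t * ξ ·))[ξ] = deriv (cgf ξ P) t :=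
    integral_tilted_mul_self (by simp [interior_integrableExpSet_eq_univ hexp])
  set φ : ℝ → ℝ := fun t ↦ t * deriv (cgf ξ P) t - cgf ξ P t with hφ
  have hent (t : ℝ) : ∫ ω, llr (P.tilted (t * ξ ·)) P ω ∂(P.tilted (t * ξ ·)) = φ t := by
    rw [integral_llr_tilted_mul_self (hexp t) (hint t), hmean]
  have hent_nonneg (t : ℝ) : 0 ≤ φ t := by
    have := isProbabilityMeasure_tilted (hexp t)
    exact hent t ▸ integral_llr_nonneg (tilted_absolutelyContinuous P _)
      (integrable_llr_tilted_mul_self (hexp t) (hint t))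
  obtain ⟨z, hz, hzβ, hzε⟩ := exists_pos_le_and_sub_div_le (h := fun z ↦ φ (-z))
    ((continuous_mul_deriv_cgf_sub_cgf hexp).comp continuous_neg) (by simp [φ])
    (fun z _ ↦ hent_nonneg (-z)) (neg_pos.mpr (log_neg hα.1 hα.2)) hε
  refine ⟨z, hz, (entropyLE_iff (tilted_absolutelyContinuous P _)).mpr
    ⟨integrable_llr_tilted_mul_self (hexp _) (hint _), (hent _).trans_le hzβ⟩, ?_⟩
  have hκ : log (mgf ξ P (-z)) = cgf ξ P (-z) := rfl
  have hsplit : deriv (cgf ξ P) (-z)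
      = -(1 / z) * (cgf ξ P (-z) - log α) + (-log α - φ (-z)) / z := by
    simp only [hφ]; field_simp; ring
  rw [hmean, log_div (mgf_pos (hexp _)).ne' hα.1.ne', hκ, hsplit]
  linarith

end EVaR

theorem evar_dual_representation_general
    {Ω : Type*} [MeasurableSpace Ω] (P : Measure Ω) [IsProbabilityMeasure P]
    (α : ℝ) (hα : α ∈ Set.Ioo (0 : ℝ) 1)
    (ξ : Ω → ℝ) (hmeas : Measurable ξ) (hbdd : ∃ C : ℝ, ∀ᵐ ω ∂P, |ξ ω| ≤ C) :
    sSup {y : ℝ | ∃ z : ℝ, 0 < z ∧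
        y = -(1 / z) * Real.log ((∫ ω, Real.exp (-z * ξ ω) ∂P) / α)}
      = sInf {y : ℝ | ∃ Q : Measure Ω, IsProbabilityMeasure Q ∧ Q ≪ P ∧
          EntropyLE Q P (-Real.log α) ∧ y = ∫ ω, ξ ω ∂Q} := by
  obtain ⟨C, hC⟩ := hbdd
  have hexp := integrable_exp_mul_of_abs_le hmeas.aemeasurable hC
  have hβ : 0 ≤ -log α := (neg_pos.mpr (log_neg hα.1 hα.2)).le
  refine csSup_eq_csInf_of_forall_le_of_forall_exists_le_add ⟨_, 1, one_pos, rfl⟩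
    ⟨_, P, inferInstance, .rfl, entropyLE_self hβ, rfl⟩ ?_ fun ε hε ↦ ?_
  · rintro _ ⟨z, hz, rfl⟩ _ ⟨Q, hQ, hQP, hent, rfl⟩
    exact neg_inv_mul_log_mgf_div_le_integral hQP hα.1 hent
      (integrable_of_abs_le_of_absolutelyContinuous hQP hmeas.aestronglyMeasurable hC) hz (hexp _)
  · obtain ⟨z, hz, hent, hle⟩ := exists_entropyLE_tilted_integral_le hmeas hC hα hε
    exact ⟨_, ⟨_, isProbabilityMeasure_tilted (hexp _), tilted_absolutelyContinuous P _, hent, rfl⟩,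
      _, ⟨z, hz, rfl⟩, hle⟩

/-- The dual representation of the Entropic Value at Risk: for every bounded random
variable `ξ` on an atomless probability space and every `α ∈ (0,1)`,
`e_α(ξ) = inf { E_Q[ξ] : Q ≪ P, H(Q|P) ≤ -log α }`. -/
theorem evar_dual_representation
    {Ω : Type*} [MeasurableSpace Ω] (P : Measure Ω) [IsProbabilityMeasure P] [NullSingletonClass P]
    (α : ℝ) (hα : α ∈ Set.Ioo (0 : ℝ) 1)
    (ξ : Ω → ℝ) (hmeas : Measurable ξ) (hbdd : ∃ C : ℝ, ∀ᵐ ω ∂P, |ξ ω| ≤ C) :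
    sSup {y : ℝ | ∃ z : ℝ, 0 < z ∧
        y = -(1 / z) * Real.log ((∫ ω, Real.exp (-z * ξ ω) ∂P) / α)}
      = sInf {y : ℝ | ∃ Q : Measure Ω, IsProbabilityMeasure Q ∧ Q ≪ P ∧
          EntropyLE Q P (-Real.log α) ∧ y = ∫ ω, ξ ω ∂Q} :=
  evar_dual_representation_general P α hα ξ hmeas hbdd
end

section
/- Let A ∈ F with a = P(A) ∈ (0,1) and α ∈ (0,1). Then the infimum of Q(A) over all probability measures Q ≪ P with H(Q|P) ≤ -log α is attained by a measure whose density has the two-valued form dQ/dP = λ·1_A/a + (1-λ)·1_{A^c}/(1-a) for some λ ∈ [0,1], and consequently e_α(1_A) = min { λ ∈ [0,1] : F(λ,a) ≤ -log α }. -/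
open MeasureTheory

/-- `F(λ,a) = λ log λ + (1-λ) log(1-λ) - λ log a - (1-λ) log(1-a)`, the relative entropy
of the two-valued density `λ 1_A/a + (1-λ) 1_{Aᶜ}/(1-a)` (with `0 log 0 = 0`,
which is `Real.log 0 = 0` in Mathlib). -/
noncomputable def F (l a : ℝ) : ℝ :=
  l * Real.log l + (1 - l) * Real.log (1 - l) - l * Real.log a - (1 - l) * Real.log (1 - a)

/-!
For any `Q ≪ P`, Jensen's inequality for `x log x` on each cell of the partition `{A, Aᶜ}`
gives `F(Q(A), P(A)) ≤ H(Q|P)`. Conversely, with `a = P(A)`, every `λ ∈ [0,1]` is `Q(A)` for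
the measure with the two-valued density `λ 1_A/a + (1-λ) 1_{Aᶜ}/(1-a)`, whose entropy is exactly
`F(λ, a)`. Hence the attainable values of `Q(A)` form the compact set
`{λ ∈ [0,1] | F(λ, a) ≤ -log α}`, which contains `a`, and its least element is the attained
infimum.
-/

open Real Set

lemma mul_log_div_eq_mul_log_sub {l a : ℝ} (ha : a ≠ 0) :
    l * log (l / a) = l * log l - l * log a := by
  rcases eq_or_ne l 0 with rfl | hl
  · simp
  · rw [log_div hl ha, mul_sub]

lemma F_eq_add_mul_log_div {l a : ℝ} (ha₀ : a ≠ 0) (ha₁ : 1 - a ≠ 0) :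
    F l a = l * log (l / a) + (1 - l) * log ((1 - l) / (1 - a)) := by
  rw [mul_log_div_eq_mul_log_sub ha₀, mul_log_div_eq_mul_log_sub ha₁, F]
  ring

lemma F_self (a : ℝ) : F a a = 0 := by
  rw [F]; ring

lemma continuous_F_left (a : ℝ) : Continuous fun l => F l a := by
  unfold F
  fun_prop

lemma exists_isLeast_F_le {a β : ℝ} (ha : a ∈ Icc 0 1) (hβ : 0 ≤ β) :
    ∃ lam, IsLeast {l ∈ Icc 0 1 | F l a ≤ β} lam :=
  (isCompact_Icc.inter_right (isClosed_le (continuous_F_left a) continuous_const)).exists_isLeast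
    ⟨a, ha, show F a a ≤ β by rwa [F_self]⟩

lemma comp_indicator_add_compl_indicator {Ω M : Type*} [AddMonoid M] (φ : ℝ → M) (A : Set Ω)
    (c d : ℝ) :
    (fun ω => φ (A.indicator (fun _ => c) ω + Aᶜ.indicator (fun _ => d) ω)) =
      A.indicator (fun _ => φ c) + Aᶜ.indicator (fun _ => φ d) := by
  ext ω
  by_cases hω : ω ∈ A <;> simp [hω]

section Entropy

variable {Ω : Type*} [MeasurableSpace Ω] {P Q : Measure Ω} {A s : Set Ω}

lemma mul_log_div_le_setIntegral_entIntegrand [SigmaFinite P] [IsFiniteMeasure Q]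
    (hQP : Q ≪ P) (hs₀ : P s ≠ 0) (hs : P s ≠ ⊤)
    (hint : IntegrableOn (entIntegrand Q P) s P) :
    Q.real s * log (Q.real s / P.real s) ≤ ∫ x in s, entIntegrand Q P x ∂P := by
  have hjensen := convexOn_mul_log.map_set_average_le continuous_mul_log.continuousOn
    isClosed_Ici hs₀ hs (.of_forall fun ω => ENNReal.toReal_nonneg)
    Measure.integrable_toReal_rnDeriv.integrableOn hint
  rw [setAverage_eq, setAverage_eq, Measure.setIntegral_toReal_rnDeriv hQP, smul_eq_mul,
    smul_eq_mul, ← div_eq_inv_mul, ← div_eq_inv_mul] at hjensen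
  have hp : 0 < P.real s := ENNReal.toReal_pos hs₀ hs
  calc Q.real s * log (Q.real s / P.real s)
      = P.real s * (Q.real s / P.real s * log (Q.real s / P.real s)) := by
        rw [← mul_assoc, mul_div_cancel₀ _ hp.ne']
    _ ≤ P.real s * ((∫ x in s, entIntegrand Q P x ∂P) / P.real s) :=
        mul_le_mul_of_nonneg_left hjensen hp.le
    _ = ∫ x in s, entIntegrand Q P x ∂P := mul_div_cancel₀ _ hp.ne'

lemma F_le_integral_entIntegrand [IsProbabilityMeasure P] [IsProbabilityMeasure Q]
    (hQP : Q ≪ P) (hA : MeasurableSet A) (ha : P.real A ∈ Ioo 0 1)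
    (hint : Integrable (entIntegrand Q P) P) :
    F (Q.real A) (P.real A) ≤ ∫ ω, entIntegrand Q P ω ∂P := by
  have hA₀ : P A ≠ 0 := fun h => ha.1.ne' (by simp [Measure.real, h])
  have hAc : P.real Aᶜ = 1 - P.real A := probReal_compl_eq_one_sub hA
  have hAc₀ : P Aᶜ ≠ 0 := fun h =>
    (sub_pos.2 ha.2).ne' (by rw [← hAc]; simp [Measure.real, h])
  rw [F_eq_add_mul_log_div ha.1.ne' (sub_pos.2 ha.2).ne', ← integral_add_compl hA hint, ← hAc,
    ← probReal_compl_eq_one_sub hA]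
  exact add_le_add
    (mul_log_div_le_setIntegral_entIntegrand hQP hA₀ (measure_ne_top _ _) hint.integrableOn)
    (mul_log_div_le_setIntegral_entIntegrand hQP hAc₀ (measure_ne_top _ _) hint.integrableOn)

lemma entIntegrand_withDensity_ofReal [SigmaFinite P] {f : Ω → ℝ} (hf : Measurable f)
    (hf₀ : 0 ≤ f) :
    entIntegrand (P.withDensity fun ω => ENNReal.ofReal (f ω)) P =ᵐ[P]
      fun ω => f ω * log (f ω) := by
  filter_upwards [Measure.rnDeriv_withDensity P hf.ennreal_ofReal] with ω hω
  rw [entIntegrand, hω, ENNReal.toReal_ofReal (hf₀ ω)]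

lemma withDensity_ofReal_indicator_add_compl_indicator (hA : MeasurableSet A) (c d : ℝ) :
    P.withDensity (fun ω =>
        ENNReal.ofReal (A.indicator (fun _ => c) ω + Aᶜ.indicator (fun _ => d) ω)) =
      ENNReal.ofReal c • P.restrict A + ENNReal.ofReal d • P.restrict Aᶜ := by
  rw [comp_indicator_add_compl_indicator ENNReal.ofReal,
    withDensity_add_left (measurable_const.indicator hA), withDensity_indicator hA,
    withDensity_indicator hA.compl, withDensity_const, withDensity_const]

noncomputable def twoValuedMeasure (P : Measure Ω) (A : Set Ω) (lam : ℝ) : Measure Ω :=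
  P.withDensity fun ω => ENNReal.ofReal (A.indicator (fun _ => lam / P.real A) ω +
    Aᶜ.indicator (fun _ => (1 - lam) / (1 - P.real A)) ω)

variable [IsProbabilityMeasure P] {lam : ℝ}

lemma twoValuedMeasure_apply (hA : MeasurableSet A) (ha : P.real A ∈ Ioo 0 1) :
    twoValuedMeasure P A lam A = ENNReal.ofReal lam ∧
      twoValuedMeasure P A lam Aᶜ = ENNReal.ofReal (1 - lam) := by
  have hPA : P A = ENNReal.ofReal (P.real A) := (ENNReal.ofReal_toReal (measure_ne_top P A)).symm
  have hPAc : P Aᶜ = ENNReal.ofReal (1 - P.real A) := by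
    rw [← probReal_compl_eq_one_sub hA]
    exact (ENNReal.ofReal_toReal (measure_ne_top P Aᶜ)).symm
  rw [twoValuedMeasure, withDensity_ofReal_indicator_add_compl_indicator hA]
  simp only [Measure.add_apply, Measure.smul_apply, Measure.restrict_apply hA,
    Measure.restrict_apply hA.compl, inter_self, compl_inter_self, inter_compl_self,
    measure_empty, smul_eq_mul, mul_zero, add_zero, zero_add, hPA, hPAc,
    ← ENNReal.ofReal_mul' ha.1.le, ← ENNReal.ofReal_mul' (sub_pos.2 ha.2).le,
    div_mul_cancel₀ _ ha.1.ne', div_mul_cancel₀ _ (sub_pos.2 ha.2).ne', and_self]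

lemma isProbabilityMeasure_twoValuedMeasure (hA : MeasurableSet A) (ha : P.real A ∈ Ioo 0 1)
    (hlam : lam ∈ Icc 0 1) : IsProbabilityMeasure (twoValuedMeasure P A lam) := by
  constructor
  obtain ⟨h₁, h₂⟩ := twoValuedMeasure_apply hA ha
  rw [← union_compl_self A, measure_union disjoint_compl_right hA.compl, h₁, h₂,
    ← ENNReal.ofReal_add hlam.1 (sub_nonneg.2 hlam.2), add_sub_cancel, ENNReal.ofReal_one]

lemma entIntegrand_twoValuedMeasure (hA : MeasurableSet A) (ha : P.real A ∈ Ioo 0 1)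
    (hlam : lam ∈ Icc 0 1) :
    entIntegrand (twoValuedMeasure P A lam) P =ᵐ[P]
      A.indicator (fun _ => lam / P.real A * log (lam / P.real A)) +
        Aᶜ.indicator (fun _ =>
          (1 - lam) / (1 - P.real A) * log ((1 - lam) / (1 - P.real A))) := by
  rw [← comp_indicator_add_compl_indicator fun x => x * log x]
  exact entIntegrand_withDensity_ofReal
    (f := fun ω => A.indicator (fun _ => lam / P.real A) ω +
      Aᶜ.indicator (fun _ => (1 - lam) / (1 - P.real A)) ω)
    ((measurable_const.indicator hA).add (measurable_const.indicator hA.compl))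
    fun ω => add_nonneg (indicator_nonneg (fun _ _ => div_nonneg hlam.1 ha.1.le) ω)
      (indicator_nonneg (fun _ _ => div_nonneg (sub_nonneg.2 hlam.2) (sub_pos.2 ha.2).le) ω)

lemma entropyLE_twoValuedMeasure (hA : MeasurableSet A) (ha : P.real A ∈ Ioo 0 1)
    (hlam : lam ∈ Icc 0 1) {β : ℝ} (hF : F lam (P.real A) ≤ β) :
    EntropyLE (twoValuedMeasure P A lam) P β := by
  have hdens := entIntegrand_twoValuedMeasure hA ha hlam
  have ha₁ : 1 - P.real A ≠ 0 := (sub_pos.2 ha.2).ne'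
  have hintA := (integrable_const (μ := P) (lam / P.real A * log (lam / P.real A))).indicator hA
  have hintAc := (integrable_const (μ := P)
    ((1 - lam) / (1 - P.real A) * log ((1 - lam) / (1 - P.real A)))).indicator hA.compl
  refine ⟨(hintA.add hintAc).congr hdens.symm, ?_⟩
  rw [integral_congr_ae hdens, integral_add' hintA hintAc, integral_indicator_const _ hA,
    integral_indicator_const _ hA.compl, probReal_compl_eq_one_sub hA, smul_eq_mul, smul_eq_mul,
    ← mul_assoc, ← mul_assoc, mul_div_cancel₀ _ ha.1.ne', mul_div_cancel₀ _ ha₁,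
    ← F_eq_add_mul_log_div ha.1.ne' ha₁]
  exact hF

end Entropy

theorem evar_indicator_attained_two_valued_general
    {Ω : Type*} [MeasurableSpace Ω] (P : Measure Ω) [IsProbabilityMeasure P]
    (α : ℝ) (hα : α ∈ Set.Ioo (0 : ℝ) 1)
    (A : Set Ω) (hA : MeasurableSet A) (ha : (P A).toReal ∈ Set.Ioo (0 : ℝ) 1) :
    ∃ lam ∈ Set.Icc (0 : ℝ) 1,
      F lam (P A).toReal ≤ -Real.log α ∧
      (IsProbabilityMeasure
          (P.withDensity (fun ω => ENNReal.ofReal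
            (Set.indicator A (fun _ => lam / (P A).toReal) ω +
             Set.indicator Aᶜ (fun _ => (1 - lam) / (1 - (P A).toReal)) ω))) ∧
        (P.withDensity (fun ω => ENNReal.ofReal
            (Set.indicator A (fun _ => lam / (P A).toReal) ω +
             Set.indicator Aᶜ (fun _ => (1 - lam) / (1 - (P A).toReal)) ω)) ≪ P) ∧
        EntropyLE
          (P.withDensity (fun ω => ENNReal.ofReal
            (Set.indicator A (fun _ => lam / (P A).toReal) ω +
             Set.indicator Aᶜ (fun _ => (1 - lam) / (1 - (P A).toReal)) ω))) P
          (-Real.log α) ∧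
        ((P.withDensity (fun ω => ENNReal.ofReal
            (Set.indicator A (fun _ => lam / (P A).toReal) ω +
             Set.indicator Aᶜ (fun _ => (1 - lam) / (1 - (P A).toReal)) ω))) A).toReal
          = lam) ∧
      sInf {y : ℝ | ∃ Q : Measure Ω, IsProbabilityMeasure Q ∧ Q ≪ P ∧
          EntropyLE Q P (-Real.log α) ∧ y = (Q A).toReal} = lam ∧
      ∀ l ∈ Set.Icc (0 : ℝ) 1, F l (P A).toReal ≤ -Real.log α → lam ≤ l := by
  have hβ : 0 ≤ -log α := neg_nonneg.2 (log_nonpos hα.1.le hα.2.le)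
  obtain ⟨lam, ⟨hlam, hFlam⟩, hmin⟩ := exists_isLeast_F_le (Ioo_subset_Icc_self ha) hβ
  have hprob := isProbabilityMeasure_twoValuedMeasure hA ha hlam
  have hac : twoValuedMeasure P A lam ≪ P := withDensity_absolutelyContinuous _ _
  have hent := entropyLE_twoValuedMeasure hA ha hlam hFlam
  have hQA : (twoValuedMeasure P A lam).real A = lam := by
    rw [Measure.real, (twoValuedMeasure_apply hA ha).1, ENNReal.toReal_ofReal hlam.1]
  refine ⟨lam, hlam, hFlam, ⟨hprob, hac, hent, hQA⟩,
    IsLeast.csInf_eq ⟨⟨_, hprob, hac, hent, hQA.symm⟩, ?_⟩,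
    fun l hl hFl => hmin ⟨hl, hFl⟩⟩
  rintro _ ⟨Q, hQ, hQP, hQent, rfl⟩
  exact hmin ⟨⟨measureReal_nonneg, measureReal_le_one⟩,
    (F_le_integral_entIntegrand hQP hA ha hQent.1).trans hQent.2⟩

/-- For an indicator `1_A` with `a = P(A) ∈ (0,1)`, the infimum of `Q(A)` over all probability
measures `Q ≪ P` with `H(Q|P) ≤ -log α` is attained by a measure whose density has the
two-valued form `λ 1_A/a + (1-λ) 1_{Aᶜ}/(1-a)`, and
`e_α(1_A) = min { λ ∈ [0,1] : F(λ,a) ≤ -log α }`. -/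
theorem evar_indicator_attained_two_valued
    {Ω : Type*} [MeasurableSpace Ω] (P : Measure Ω) [IsProbabilityMeasure P] [NullSingletonClass P]
    (α : ℝ) (hα : α ∈ Set.Ioo (0 : ℝ) 1)
    (A : Set Ω) (hA : MeasurableSet A) (ha : (P A).toReal ∈ Set.Ioo (0 : ℝ) 1) :
    ∃ lam ∈ Set.Icc (0 : ℝ) 1,
      F lam (P A).toReal ≤ -Real.log α ∧
      (IsProbabilityMeasure
          (P.withDensity (fun ω => ENNReal.ofReal
            (Set.indicator A (fun _ => lam / (P A).toReal) ω +
             Set.indicator Aᶜ (fun _ => (1 - lam) / (1 - (P A).toReal)) ω))) ∧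
        (P.withDensity (fun ω => ENNReal.ofReal
            (Set.indicator A (fun _ => lam / (P A).toReal) ω +
             Set.indicator Aᶜ (fun _ => (1 - lam) / (1 - (P A).toReal)) ω)) ≪ P) ∧
        EntropyLE
          (P.withDensity (fun ω => ENNReal.ofReal
            (Set.indicator A (fun _ => lam / (P A).toReal) ω +
             Set.indicator Aᶜ (fun _ => (1 - lam) / (1 - (P A).toReal)) ω))) P
          (-Real.log α) ∧
        ((P.withDensity (fun ω => ENNReal.ofReal
            (Set.indicator A (fun _ => lam / (P A).toReal) ω +
             Set.indicator Aᶜ (fun _ => (1 - lam) / (1 - (P A).toReal)) ω))) A).toReal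
          = lam) ∧
      sInf {y : ℝ | ∃ Q : Measure Ω, IsProbabilityMeasure Q ∧ Q ≪ P ∧
          EntropyLE Q P (-Real.log α) ∧ y = (Q A).toReal} = lam ∧
      ∀ l ∈ Set.Icc (0 : ℝ) 1, F l (P A).toReal ≤ -Real.log α → lam ≤ l :=
  evar_indicator_attained_two_valued_general P α hα A hA ha
end

section
/- Let A ∈ F with 0 < P(A) < 1 and α ∈ (0,1). If P(A) ≤ 1-α, then e_α(1_A) = 0; if P(A) > 1-α, then e_α(1_A) = Λ(P(A)) > 0, where Λ(a) is the unique λ ∈ [0,a) with F(λ,a) = -log α. -/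
/-!
Writing `a = P(A)`, the indicator is a Bernoulli(`a`) variable with Laplace transform
`Q(z) = a e^{-z} + 1 - a`, and `-(1/z) log (Q(z)/α) ≤ l` iff `log α - z l ≤ log Q(z)`.
If `a ≤ 1 - α` then `Q ≥ α`, so the supremum is `≤ 0`, and it is `≥ 0` because `Q ≤ 1` gives the
lower bound `log α / z → 0`. If `a > 1 - α`, then `log α = -F(l, a)`, and concavity of `log`
applied to `Q(z) = l · (a e^{-z} / l) + (1 - l) · ((1 - a) / (1 - l))` is the Gibbs inequality
`-F(l, a) - z l ≤ log Q(z)`, with equality at the tilt `e^z = a (1 - l) / (l (1 - a))`.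
-/

open MeasureTheory

/-- The Entropic Value at Risk at level `α`:
`e_α(ξ) = sup_{z>0} ( -(1/z) log E_P[exp(-zξ)/α] )`. -/
noncomputable def evar {Ω : Type*} [MeasurableSpace Ω] (P : Measure Ω) (α : ℝ)
    (ξ : Ω → ℝ) : ℝ :=
  sSup {y : ℝ | ∃ z : ℝ, 0 < z ∧
    y = -(1 / z) * Real.log ((∫ ω, Real.exp (-z * ξ ω) ∂P) / α)}

open Real Set Filter

noncomputable def evarBernoulliObjective (a α z : ℝ) : ℝ :=
  -(1 / z) * log ((a * exp (-z) + (1 - a)) / α)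

theorem integral_exp_neg_mul_indicator_one {Ω : Type*} [MeasurableSpace Ω] (P : Measure Ω)
    [IsProbabilityMeasure P] {A : Set Ω} (hA : MeasurableSet A) (z : ℝ) :
    ∫ ω, exp (-z * A.indicator (fun _ => (1 : ℝ)) ω) ∂P
      = (P A).toReal * exp (-z) + (1 - (P A).toReal) := by
  have hfun : (fun ω => exp (-z * A.indicator (fun _ => (1 : ℝ)) ω))
      = fun ω => A.indicator (fun _ => exp (-z) - 1) ω + 1 := by
    funext ω
    by_cases hω : ω ∈ A <;> simp [hω]
  rw [hfun, integral_add ((integrable_const _).indicator hA) (integrable_const 1),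
    integral_indicator_const _ hA, integral_const]
  simp only [measureReal_def, measure_univ, ENNReal.toReal_one, smul_eq_mul, one_mul]
  ring

theorem evar_indicator_one_eq_sSup {Ω : Type*} [MeasurableSpace Ω] (P : Measure Ω)
    [IsProbabilityMeasure P] (α : ℝ) {A : Set Ω} (hA : MeasurableSet A) :
    evar P α (A.indicator fun _ => (1 : ℝ))
      = sSup (evarBernoulliObjective (P A).toReal α '' Ioi 0) := by
  rw [evar]
  congr 1
  ext y
  simp only [mem_ofPred_eq, mem_image, mem_Ioi, integral_exp_neg_mul_indicator_one P hA,
    evarBernoulliObjective, eq_comm]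

section Bernoulli

variable {a α z l : ℝ}

theorem bernoulli_laplace_pos (ha : a ∈ Icc 0 1) (z : ℝ) : 0 < a * exp (-z) + (1 - a) := by
  rcases ha.2.lt_or_eq with ha1 | rfl
  · linarith [mul_nonneg ha.1 (exp_pos (-z)).le]
  · simpa using exp_pos (-z)

theorem evarBernoulliObjective_le_iff (ha : a ∈ Icc 0 1) (hα : 0 < α) (hz : 0 < z) :
    evarBernoulliObjective a α z ≤ l ↔ log α - z * l ≤ log (a * exp (-z) + (1 - a)) := by
  rw [evarBernoulliObjective, log_div (bernoulli_laplace_pos ha z).ne' hα.ne',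
    neg_mul, one_div_mul_eq_div, neg_le, le_div_iff₀ hz]
  constructor <;> intro h <;> linarith

theorem le_evarBernoulliObjective_iff (ha : a ∈ Icc 0 1) (hα : 0 < α) (hz : 0 < z) :
    l ≤ evarBernoulliObjective a α z ↔ log (a * exp (-z) + (1 - a)) ≤ log α - z * l := by
  rw [evarBernoulliObjective, log_div (bernoulli_laplace_pos ha z).ne' hα.ne',
    neg_mul, one_div_mul_eq_div, le_neg, div_le_iff₀ hz]
  constructor <;> intro h <;> linarith

theorem sSup_evarBernoulliObjective_eq_zero (ha : 0 ≤ a) (hα : 0 < α) (haα : a ≤ 1 - α) :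
    sSup (evarBernoulliObjective a α '' Ioi 0) = 0 := by
  have ha' : a ∈ Icc 0 1 := ⟨ha, by linarith⟩
  have hle : ∀ z > 0, evarBernoulliObjective a α z ≤ 0 := fun z hz => by
    rw [evarBernoulliObjective_le_iff ha' hα hz, mul_zero, sub_zero]
    exact log_le_log hα (by nlinarith [exp_pos (-z)])
  have hge : ∀ z > 0, log α / z ≤ evarBernoulliObjective a α z := fun z hz => by
    rw [le_evarBernoulliObjective_iff ha' hα hz, mul_div_cancel₀ _ hz.ne', sub_self]
    exact log_nonpos (bernoulli_laplace_pos ha' z).le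
      (by nlinarith [exp_le_one_iff.mpr (neg_nonpos.mpr hz.le)])
  have hbdd : BddAbove (evarBernoulliObjective a α '' Ioi 0) := ⟨0, by
    rintro _ ⟨z, hz, rfl⟩
    exact hle z hz⟩
  refine le_antisymm (csSup_le (nonempty_Ioi.image _) ?_) ?_
  · rintro _ ⟨z, hz, rfl⟩
    exact hle z hz
  · refine le_of_tendsto ((tendsto_const_nhds (x := log α)).div_atTop tendsto_id) ?_
    filter_upwards [eventually_gt_atTop 0] with z hz
    exact (hge z hz).trans (le_csSup hbdd (mem_image_of_mem _ hz))

theorem F_zero_left (a : ℝ) : F 0 a = -log (1 - a) := by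
  simp [F]

theorem neg_F_sub_mul_le_log (hl : l ∈ Ioo 0 1) (ha : a ∈ Ioo 0 1) (z : ℝ) :
    -F l a - z * l ≤ log (a * exp (-z) + (1 - a)) := by
  obtain ⟨hl0, hl1⟩ := hl
  obtain ⟨ha0, ha1⟩ := ha
  have hx : 0 < a * exp (-z) / l := by positivity
  have hy : 0 < (1 - a) / (1 - l) := div_pos (by linarith) (by linarith)
  have hconc := strictConcaveOn_log_Ioi.concaveOn.2 (mem_Ioi.2 hx) (mem_Ioi.2 hy) hl0.le
    (sub_nonneg.2 hl1.le) (add_sub_cancel l 1)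
  have hmix : l • (a * exp (-z) / l) + (1 - l) • ((1 - a) / (1 - l))
      = a * exp (-z) + (1 - a) := by
    simp only [smul_eq_mul]
    field_simp [(sub_pos.2 hl1).ne']
  rw [hmix, smul_eq_mul, smul_eq_mul, log_div (by positivity) hl0.ne',
    log_mul ha0.ne' (exp_pos _).ne', log_exp, log_div (by linarith) (by linarith)] at hconc
  unfold F
  linarith

theorem log_eq_neg_F_sub_mul_of_exp_eq (hl : l ∈ Ioo 0 1) (ha : a ∈ Ioo 0 1)
    (hz : exp z = a * (1 - l) / (l * (1 - a))) :
    log (a * exp (-z) + (1 - a)) = -F l a - z * l := by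
  obtain ⟨hl0, hl1⟩ := hl
  obtain ⟨ha0, ha1⟩ := ha
  have h1l : 0 < 1 - l := by linarith
  have h1a : 0 < 1 - a := by linarith
  have hQ : a * exp (-z) + (1 - a) = (1 - a) / (1 - l) := by
    rw [exp_neg, hz]
    field_simp
    ring
  have hzlog : z = log a + log (1 - l) - log l - log (1 - a) := by
    rw [← log_exp z, hz, log_div (by positivity) (by positivity), log_mul ha0.ne' h1l.ne',
      log_mul hl0.ne' h1a.ne']
    ring
  rw [hQ, log_div h1a.ne' h1l.ne', hzlog, F]
  ring

theorem sSup_evarBernoulliObjective_eq (hl : l ∈ Ioo 0 a) (ha : a < 1) (hα : 0 < α)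
    (hF : F l a = -log α) :
    sSup (evarBernoulliObjective a α '' Ioi 0) = l := by
  obtain ⟨hl0, hla⟩ := hl
  have ha' : a ∈ Ioo 0 1 := ⟨hl0.trans hla, ha⟩
  have hl' : l ∈ Ioo 0 1 := ⟨hl0, hla.trans ha⟩
  have hlogα : log α = -F l a := by linarith
  set z₀ := log (a * (1 - l) / (l * (1 - a)))
  have htilt : 1 < a * (1 - l) / (l * (1 - a)) := by
    rw [one_lt_div (mul_pos hl0 (by linarith))]
    nlinarith
  have hz₀ : exp z₀ = a * (1 - l) / (l * (1 - a)) := exp_log (by linarith)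
  refine IsGreatest.csSup_eq ⟨⟨z₀, log_pos htilt, le_antisymm ?_ ?_⟩, ?_⟩
  · rw [evarBernoulliObjective_le_iff (Ioo_subset_Icc_self ha') hα (log_pos htilt), hlogα,
      log_eq_neg_F_sub_mul_of_exp_eq hl' ha' hz₀]
  · rw [le_evarBernoulliObjective_iff (Ioo_subset_Icc_self ha') hα (log_pos htilt), hlogα,
      log_eq_neg_F_sub_mul_of_exp_eq hl' ha' hz₀]
  · rintro _ ⟨z, hz, rfl⟩
    rw [evarBernoulliObjective_le_iff (Ioo_subset_Icc_self ha') hα hz, hlogα]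
    exact neg_F_sub_mul_le_log hl' ha' z

end Bernoulli

theorem evar_indicator_general
    {Ω : Type*} [MeasurableSpace Ω] (P : Measure Ω) [IsProbabilityMeasure P]
    (α : ℝ) (hα : α ∈ Set.Ioo (0 : ℝ) 1)
    (A : Set Ω) (hA : MeasurableSet A) (ha : (P A).toReal ∈ Set.Ioo (0 : ℝ) 1) :
    ((P A).toReal ≤ 1 - α → evar P α (Set.indicator A fun _ => (1 : ℝ)) = 0) ∧
    (1 - α < (P A).toReal →
      ∀ l ∈ Set.Ico (0 : ℝ) (P A).toReal, F l (P A).toReal = -Real.log α →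
        evar P α (Set.indicator A fun _ => (1 : ℝ)) = l ∧ 0 < l) := by
  rw [evar_indicator_one_eq_sSup P α hA]
  refine ⟨sSup_evarBernoulliObjective_eq_zero ha.1.le hα.1, fun haα l hl hF => ?_⟩
  have hl_pos : 0 < l := by
    refine hl.1.lt_of_ne fun h0 => ?_
    rw [← h0, F_zero_left, neg_inj] at hF
    have : 1 - (P A).toReal = α :=
      log_injOn_pos (mem_Ioi.2 (sub_pos.2 ha.2)) (mem_Ioi.2 hα.1) hF
    linarith
  exact ⟨sSup_evarBernoulliObjective_eq ⟨hl_pos, hl.2⟩ ha.2 hα.1 hF, hl_pos⟩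

/-- The value of the Entropic Value at Risk on indicators: with `a = P(A) ∈ (0,1)`,
if `a ≤ 1-α` then `e_α(1_A) = 0`; if `a > 1-α` then `e_α(1_A) = Λ(a) > 0`, where `Λ(a)`
is the unique `λ ∈ [0,a)` with `F(λ,a) = -log α`. -/
theorem evar_indicator
    {Ω : Type*} [MeasurableSpace Ω] (P : Measure Ω) [IsProbabilityMeasure P] [NullSingletonClass P]
    (α : ℝ) (hα : α ∈ Set.Ioo (0 : ℝ) 1)
    (A : Set Ω) (hA : MeasurableSet A) (ha : (P A).toReal ∈ Set.Ioo (0 : ℝ) 1) :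
    ((P A).toReal ≤ 1 - α → evar P α (Set.indicator A fun _ => (1 : ℝ)) = 0) ∧
    (1 - α < (P A).toReal →
      ∀ l ∈ Set.Ico (0 : ℝ) (P A).toReal, F l (P A).toReal = -Real.log α →
        evar P α (Set.indicator A fun _ => (1 : ℝ)) = l ∧ 0 < l) :=
  evar_indicator_general P α hα A hA ha
end

section
/- The derivative Λ'(a) of the implicit function Λ tends to +∞ as a → 1⁻. -/
/-!
By the implicit function theorem `Λ` is differentiable on `(1 - α, 1)` with
`Λ' = -∂ₐF / ∂_λF = ((1-λ)/(1-a) - λ/a) / (logit a - logit λ)`.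
Put `β = -log α` and `L = -log (1 - a)`. Since `F λ a = -binEntropy λ - λ log a + (1-λ) L` and
`0 ≤ binEntropy ≤ log 2`, the equation `F (Λ a) a = β` traps `(1 - Λ a) L` between `β/2` and
`β + log 2` once `a` is close to `1`. Hence `Λ a ≥ 1/2`, the denominator is at most `2L` and the
numerator at least `β / (2L(1-a)) - 2`, so `Λ'(a) ≥ β / (4(1-a)L²) - 1/L`, which tends to `∞`
because `(1-a) log² (1-a) → 0`.
-/

open Real Set Filter Topology

open ContinuousLinearMap in
theorem hasDerivAt_implicit {f f₁ f₂ : ℝ → ℝ → ℝ} {g : ℝ → ℝ} {x₀ : ℝ}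
    (df₁ : ∀ᶠ v in 𝓝 (x₀, g x₀), HasDerivAt (f · v.2) (f₁ v.1 v.2) v.1)
    (df₂ : ∀ᶠ v in 𝓝 (x₀, g x₀), HasDerivAt (f v.1 ·) (f₂ v.1 v.2) v.2)
    (cf₁ : ContinuousAt ↿f₁ (x₀, g x₀)) (cf₂ : ContinuousAt ↿f₂ (x₀, g x₀))
    (hf₂ : f₂ x₀ (g x₀) ≠ 0)
    (hg : ∀ᶠ v in 𝓝 (x₀, g x₀), f v.1 v.2 = f x₀ (g x₀) → v.2 = g v.1) :
    HasDerivAt g (-f₁ x₀ (g x₀) / f₂ x₀ (g x₀)) x₀ := by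
  set F₁ : ℝ → ℝ → ℝ →L[ℝ] ℝ := fun x y => toSpanSingleton ℝ (f₁ x y)
  set F₂ : ℝ → ℝ → ℝ →L[ℝ] ℝ := fun x y => toSpanSingleton ℝ (f₂ x y)
  have cont : Continuous (toSpanSingleton ℝ : ℝ → ℝ →L[ℝ] ℝ) :=
    (toSpanSingletonLIE ℝ ℝ).continuous
  have cF₁ : ContinuousAt ↿F₁ (x₀, g x₀) := cont.continuousAt.comp cf₁
  have cF₂ : ContinuousAt ↿F₂ (x₀, g x₀) := cont.continuousAt.comp cf₂
  have right_inv : F₂ x₀ (g x₀) ∘L toSpanSingleton ℝ (f₂ x₀ (g x₀))⁻¹ = .id ℝ ℝ := by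
    ext; simp [F₂, hf₂]
  have left_inv : toSpanSingleton ℝ (f₂ x₀ (g x₀))⁻¹ ∘L F₂ x₀ (g x₀) = .id ℝ ℝ := by
    ext; simp [F₂, hf₂]
  have inv : (F₂ x₀ (g x₀)).IsInvertible := .of_inverse right_inv left_inv
  set ψ := implicitFunctionOfBivariate df₁ df₂ cF₁ cF₂ inv
  have hgraph : Tendsto (fun x => (x, ψ x)) (𝓝 x₀) (𝓝 (x₀, g x₀)) :=
    tendsto_id.prodMk_nhds (tendsto_implicitFunctionOfBivariate df₁ df₂ cF₁ cF₂ inv)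
  -- `hg` identifies the local solution `ψ` given by the implicit function theorem with `g`.
  have hψg : ψ =ᶠ[𝓝 x₀] g := by
    filter_upwards [hgraph.eventually hg,
      eventually_apply_implicitFunctionOfBivariate df₁ df₂ cF₁ cF₂ inv] with x hx hfx
    exact hx hfx
  refine ((hasStrictFDerivAt_implicitFunctionOfBivariate df₁ df₂ cF₁ cF₂ inv).hasFDerivAt
    |>.hasDerivAt.congr_of_eventuallyEq hψg.symm).congr_deriv ?_
  simp [inverse_eq right_inv left_inv, F₁, div_eq_mul_inv]

lemma tendsto_one_sub_nhdsLT_one : Tendsto (fun a : ℝ => 1 - a) (𝓝[<] 1) (𝓝[>] 0) :=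
  tendsto_nhdsWithin_iff.2
    ⟨((continuous_const.sub continuous_id).tendsto' 1 0 (sub_self 1)).mono_left nhdsWithin_le_nhds,
      eventually_nhdsWithin_of_forall fun _ ha => mem_Ioi.2 (sub_pos.2 ha)⟩

lemma tendsto_mul_log_sq_nhdsGT_zero : Tendsto (fun u => u * log u ^ 2) (𝓝[>] 0) (𝓝[>] 0) := by
  have hsq := (tendsto_log_mul_rpow_nhdsGT_zero (r := 1 / 2) (by norm_num)).pow 2
  rw [zero_pow two_ne_zero] at hsq
  refine tendsto_nhdsWithin_iff.2 ⟨hsq.congr' ?_, ?_⟩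
  · filter_upwards [self_mem_nhdsWithin] with u (hu : 0 < u)
    rw [mul_pow, ← sqrt_eq_rpow, sq_sqrt hu.le, mul_comm]
  · filter_upwards [Ioo_mem_nhdsGT one_pos] with u hu
    exact mul_pos hu.1 (by nlinarith [log_neg hu.1 hu.2])

lemma tendsto_mul_inv_mul_log_sq_add_inv_log_atTop {c : ℝ} (hc : 0 < c) :
    Tendsto (fun u => c * (u * log u ^ 2)⁻¹ + (log u)⁻¹) (𝓝[>] 0) atTop :=
  (tendsto_mul_log_sq_nhdsGT_zero.inv_tendsto_nhdsGT_zero.const_mul_atTop hc).atTop_add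
    tendsto_log_nhdsGT_zero.inv_tendsto_atBot

lemma log_sub_log_one_sub_lt {l a : ℝ} (hl : 0 < l) (hla : l < a) (ha : a < 1) :
    log l - log (1 - l) < log a - log (1 - a) := by
  have := log_lt_log hl hla
  have := log_lt_log (sub_pos.2 ha) (sub_lt_sub_left hla 1)
  linarith

lemma F_eq_neg_binEntropy (l a : ℝ) :
    F l a = -binEntropy l - l * log a - (1 - l) * log (1 - a) := by
  simp only [F, binEntropy, log_inv]
  ring

lemma pos_of_F_eq_neg_log {l a α : ℝ} (hl : 0 ≤ l) (ha : a < 1) (haα : 1 - a < α)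
    (hF : F l a = -log α) : 0 < l := by
  refine hl.lt_of_ne fun h => ?_
  rw [← h] at hF
  simp only [F, zero_mul, sub_zero, log_zero, log_one, mul_zero, zero_add, one_mul] at hF
  linarith [log_lt_log (sub_pos.2 ha) haα]

lemma mul_neg_log_one_sub_le_F_add_log_two {l a : ℝ} (hl : 0 ≤ l) (ha₀ : 0 < a) (ha₁ : a ≤ 1) :
    (1 - l) * -log (1 - a) ≤ F l a + log 2 := by
  rw [F_eq_neg_binEntropy]
  nlinarith [binEntropy_le_log_two (p := l), log_nonpos ha₀.le ha₁]

lemma F_add_log_le_mul_neg_log_one_sub {l a : ℝ} (hl₀ : 0 ≤ l) (hl₁ : l ≤ 1) (ha₀ : 0 < a)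
    (ha₁ : a ≤ 1) : F l a + log a ≤ (1 - l) * -log (1 - a) := by
  rw [F_eq_neg_binEntropy]
  nlinarith [binEntropy_nonneg hl₀ hl₁, log_nonpos ha₀.le ha₁]

lemma hasDerivAt_F_left (a : ℝ) {l : ℝ} (hl₀ : l ≠ 0) (hl₁ : l ≠ 1) :
    HasDerivAt (F · a) (log l - log (1 - l) - log a + log (1 - a)) l := by
  simp_rw [F_eq_neg_binEntropy]
  exact (((hasDerivAt_binEntropy hl₀ hl₁).neg.sub ((hasDerivAt_id' l).mul_const (log a))).sub
    (((hasDerivAt_id' l).const_sub 1).mul_const (log (1 - a)))).congr_deriv (by ring)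

lemma hasDerivAt_F_right (l : ℝ) {a : ℝ} (ha₀ : a ≠ 0) (ha₁ : a ≠ 1) :
    HasDerivAt (F l ·) ((1 - l) / (1 - a) - l / a) a := by
  simp_rw [F_eq_neg_binEntropy]
  have hlog : HasDerivAt (fun x => log (1 - x)) (-(1 - a)⁻¹) a := by
    simpa [Function.comp_def] using
      (hasDerivAt_log (sub_ne_zero.2 ha₁.symm)).comp a ((hasDerivAt_id a).const_sub 1)
  exact (((hasDerivAt_const a (-binEntropy l)).sub ((hasDerivAt_log ha₀).const_mul l)).sub
    (hlog.const_mul (1 - l))).congr_deriv (by ring)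

lemma strictAntiOn_F_left {a : ℝ} (ha₁ : a < 1) :
    StrictAntiOn (F · a) (Icc 0 a) := by
  have hcont : Continuous (F · a) := by
    simp_rw [F_eq_neg_binEntropy]
    fun_prop
  refine strictAntiOn_of_deriv_neg (convex_Icc 0 a) hcont.continuousOn fun l hl => ?_
  rw [interior_Icc] at hl
  rw [(hasDerivAt_F_left a hl.1.ne' (hl.2.trans ha₁).ne).deriv]
  linarith [log_sub_log_one_sub_lt hl.1 hl.2 ha₁]

theorem hasDerivAt_of_eventually_F_eq {Λ : ℝ → ℝ} {a₀ c : ℝ} (ha₀ : a₀ < 1)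
    (hΛa₀ : Λ a₀ ∈ Ioo 0 a₀) (hΛ : ∀ᶠ a in 𝓝 a₀, Λ a ∈ Ico 0 a ∧ F (Λ a) a = c) :
    HasDerivAt Λ (-((1 - Λ a₀) / (1 - a₀) - Λ a₀ / a₀) /
      (log (Λ a₀) - log (1 - Λ a₀) - log a₀ + log (1 - a₀))) a₀ := by
  obtain ⟨hl₀, hl₁⟩ := hΛa₀
  have hnear : ∀ᶠ v : ℝ × ℝ in 𝓝 (a₀, Λ a₀), 0 < v.2 ∧ v.2 < v.1 ∧ v.1 < 1 :=
    ((isOpen_lt continuous_const continuous_snd).inter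
      ((isOpen_lt continuous_snd continuous_fst).inter
        (isOpen_lt continuous_fst continuous_const))).mem_nhds ⟨hl₀, hl₁, ha₀⟩
  refine hasDerivAt_implicit (f := fun a l => F l a)
    (f₁ := fun a l => (1 - l) / (1 - a) - l / a)
    (f₂ := fun a l => log l - log (1 - l) - log a + log (1 - a)) ?_ ?_ ?_ ?_ ?_ ?_
  · filter_upwards [hnear] with v ⟨h₀, hlt, h₁⟩
    exact hasDerivAt_F_right _ (h₀.trans hlt).ne' h₁.ne
  · filter_upwards [hnear] with v ⟨h₀, hlt, h₁⟩
    exact hasDerivAt_F_left _ h₀.ne' (hlt.trans h₁).ne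
  · show ContinuousAt (fun v : ℝ × ℝ => (1 - v.2) / (1 - v.1) - v.2 / v.1) _
    fun_prop (disch := simp; linarith)
  · show ContinuousAt (fun v : ℝ × ℝ => log v.2 - log (1 - v.2) - log v.1 + log (1 - v.1)) _
    fun_prop (disch := simp; linarith)
  · linarith [log_sub_log_one_sub_lt hl₀ hl₁ ha₀]
  · filter_upwards [hnear, (continuous_fst.tendsto (a₀, Λ a₀)).eventually hΛ]
      with v ⟨h₀, hlt, h₁⟩ ⟨hΛv, hFv⟩ hF
    refine (strictAntiOn_F_left h₁).injOn ⟨h₀.le, hlt.le⟩ ⟨hΛv.1, hΛv.2.le⟩ ?_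
    simp only [hF, hFv, hΛ.self_of_nhds.2]

lemma le_neg_div_of_F_eq {l a β : ℝ} (hl : 0 < l) (hla : l < a) (ha₁ : a < 1)
    (hF : F l a = β) (hloga : -(β / 2) ≤ log a) (hL : 2 * (β + log 2) ≤ -log (1 - a)) :
    β / 4 * ((1 - a) * log (1 - a) ^ 2)⁻¹ + (log (1 - a))⁻¹ ≤
      -((1 - l) / (1 - a) - l / a) / (log l - log (1 - l) - log a + log (1 - a)) := by
  have hu : 0 < 1 - a := sub_pos.2 ha₁
  have hlog2 : 0 < log 2 := log_pos one_lt_two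
  have hL₀ : 0 < -log (1 - a) := neg_pos.2 (log_neg hu (by linarith))
  have hup := mul_neg_log_one_sub_le_F_add_log_two hl.le (by linarith) ha₁.le
  have hlow := F_add_log_le_mul_neg_log_one_sub hl.le (hla.trans ha₁).le (by linarith) ha₁.le
  rw [hF] at hup hlow
  set L := -log (1 - a) with hLdef
  have hl_half : 2⁻¹ ≤ l := by nlinarith
  have hlogl : -log 2 ≤ log l := by
    simpa only [log_inv] using log_le_log (by norm_num) hl_half
  have hD₀ : 0 < log a - log (1 - a) - log l + log (1 - l) := by
    linarith [log_sub_log_one_sub_lt hl hla ha₁]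
  have hD : log a - log (1 - a) - log l + log (1 - l) ≤ 2 * L := by
    linarith [log_nonpos (by linarith) ha₁.le, log_nonpos (by linarith) (by linarith : 1 - l ≤ 1)]
  have hN₀ : 0 < (1 - l) / (1 - a) - l / a := by
    rw [sub_pos, div_lt_div_iff₀ (by linarith) hu]
    nlinarith
  have hla2 : l / a ≤ 2 := by
    rw [div_le_iff₀ (by linarith)]
    linarith
  calc β / 4 * ((1 - a) * log (1 - a) ^ 2)⁻¹ + (log (1 - a))⁻¹
      = (β / (2 * L) / (1 - a) - 2) / (2 * L) := by
        rw [show log (1 - a) = -L by rw [hLdef, neg_neg]]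
        field_simp
        ring
    _ ≤ ((1 - l) / (1 - a) - 2) / (2 * L) := by
        gcongr
        rw [div_le_iff₀ (by positivity)]
        linarith
    _ ≤ ((1 - l) / (1 - a) - l / a) / (2 * L) := by gcongr
    _ ≤ ((1 - l) / (1 - a) - l / a) / (log a - log (1 - a) - log l + log (1 - l)) :=
        div_le_div_of_nonneg_left hN₀.le hD₀ hD
    _ = -((1 - l) / (1 - a) - l / a) / (log l - log (1 - l) - log a + log (1 - a)) := by
        rw [← neg_div_neg_eq]
        congr 1
        ring

/-- The derivative `Λ'(a)` of the implicit function `Λ` (where `Λ(a)` is the unique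
`λ ∈ [0,a)` with `F(λ,a) = -log α`) tends to `+∞` as `a → 1⁻`. -/
theorem lambda_deriv_tendsto_atTop (α : ℝ) (hα : α ∈ Set.Ioo (0 : ℝ) 1)
    (Λ : ℝ → ℝ)
    (hΛ : ∀ a ∈ Set.Ioo (1 - α) 1, Λ a ∈ Set.Ico 0 a ∧ F (Λ a) a = -Real.log α) :
    Filter.Tendsto (deriv Λ) (nhdsWithin 1 (Set.Iio 1)) Filter.atTop := by
  obtain ⟨hα₀, hα₁⟩ := hα
  have hβ : 0 < -log α := neg_pos.2 (log_neg hα₀ hα₁)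
  have hΛpos : ∀ a ∈ Ioo (1 - α) 1, 0 < Λ a := fun a ha =>
    pos_of_F_eq_neg_log (hΛ a ha).1.1 ha.2 (by linarith [ha.1]) (hΛ a ha).2
  have hloga : ∀ᶠ a in 𝓝[<] (1 : ℝ), -(-log α / 2) < log a :=
    ((continuousAt_log one_ne_zero).eventually_const_lt (by rw [log_one]; linarith)).filter_mono
      nhdsWithin_le_nhds
  have hL : ∀ᶠ a in 𝓝[<] (1 : ℝ), 2 * (-log α + log 2) ≤ -log (1 - a) :=
    (tendsto_neg_atBot_atTop.comp (tendsto_log_nhdsGT_zero.comp tendsto_one_sub_nhdsLT_one))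
      |>.eventually_ge_atTop _
  have hbound : ∀ᶠ a in 𝓝[<] (1 : ℝ),
      -log α / 4 * ((1 - a) * log (1 - a) ^ 2)⁻¹ + (log (1 - a))⁻¹ ≤ deriv Λ a := by
    filter_upwards [Ioo_mem_nhdsLT (by linarith : 1 - α < 1), hloga, hL] with a ha hloga hL
    rw [(hasDerivAt_of_eventually_F_eq ha.2 ⟨hΛpos a ha, (hΛ a ha).1.2⟩
      (eventually_of_mem (isOpen_Ioo.mem_nhds ha) hΛ)).deriv]
    exact le_neg_div_of_F_eq (hΛpos a ha) (hΛ a ha).1.2 ha.2 (hΛ a ha).2 hloga.le hL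
  exact tendsto_atTop_mono' _ hbound
    ((tendsto_mul_inv_mul_log_sq_add_inv_log_atTop (by positivity)).comp
      tendsto_one_sub_nhdsLT_one)
end

section
/- For every α ∈ (0,1), the map e_α : L^∞ → ℝ defined by e_α(ξ) = sup_{z>0} ( -(1/z) log E[ exp(-zξ)/α ] ) is a coherent utility function: it is monotone (ξ ≤ η a.s. implies e_α(ξ) ≤ e_α(η)), translation equivariant (e_α(ξ + c) = e_α(ξ) + c for every constant c), positively homogeneous (e_α(tξ) = t e_α(ξ) for t ≥ 0), and superadditive (e_α(ξ + η) ≥ e_α(ξ) + e_α(η)). -/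
/-!
`e_α(ξ)` is the supremum over `z > 0` of `z⁻¹ (log α - log E[exp (-z ξ)])`. Each of these terms
is monotone in `ξ` and shifts by `c` under `ξ ↦ ξ + c`; scaling `ξ` by `t > 0` only
reparametrizes `z ↦ t z`; and Hölder's inequality with the exponents `z₁ / z`, `z₂ / z`, where
`z⁻¹ = z₁⁻¹ + z₂⁻¹`, bounds the `z₁`-term of `ξ` plus the `z₂`-term of `η` by the `z`-term of
`ξ + η`. Since `α ≤ 1`, every term is at most an essential bound of `ξ`, so the supremum is finite
and inherits all four relations.
-/

open MeasureTheory

/-- A bounded random variable (an element of `L^∞`). -/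
def BddRV {Ω : Type*} [MeasurableSpace Ω] (P : Measure Ω) (ξ : Ω → ℝ) : Prop :=
  Measurable ξ ∧ ∃ C : ℝ, ∀ᵐ ω ∂P, |ξ ω| ≤ C

open ProbabilityTheory Set Real

section Evar

variable {Ω : Type*} [MeasurableSpace Ω] {P : Measure Ω} {α z : ℝ} {ξ η : Ω → ℝ}

theorem BddRV.add (hξ : BddRV P ξ) (hη : BddRV P η) : BddRV P (ξ + η) := by
  obtain ⟨hξm, C, hC⟩ := hξ
  obtain ⟨hηm, D, hD⟩ := hη
  refine ⟨hξm.add hηm, C + D, ?_⟩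
  filter_upwards [hC, hD] with ω hCω hDω
  exact (abs_add_le _ _).trans (add_le_add hCω hDω)

theorem BddRV.memLp_exp_mul [IsFiniteMeasure P] (hξ : BddRV P ξ) (t : ℝ) (p : ENNReal) :
    MemLp (fun ω => exp (t * ξ ω)) p P := by
  obtain ⟨hξm, C, hC⟩ := hξ
  refine .of_bound (by fun_prop) (exp (|t| * C)) ?_
  filter_upwards [hC] with ω hω
  rw [norm_of_nonneg (exp_nonneg _), exp_le_exp]
  calc t * ξ ω ≤ |t * ξ ω| := le_abs_self _
    _ = |t| * |ξ ω| := abs_mul _ _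
    _ ≤ |t| * C := mul_le_mul_of_nonneg_left hω (abs_nonneg t)

theorem BddRV.integrable_exp_mul [IsFiniteMeasure P] (hξ : BddRV P ξ) (t : ℝ) :
    Integrable (fun ω => exp (t * ξ ω)) P :=
  memLp_one_iff_integrable.1 (hξ.memLp_exp_mul t 1)

theorem mgf_add_le_of_holderConjugate {p q : ℝ} (hpq : p.HolderConjugate q) (t : ℝ)
    (hξ : MemLp (fun ω => exp (t * ξ ω)) (ENNReal.ofReal p) P)
    (hη : MemLp (fun ω => exp (t * η ω)) (ENNReal.ofReal q) P) :
    mgf (ξ + η) P t ≤ mgf ξ P (p * t) ^ p⁻¹ * mgf η P (q * t) ^ q⁻¹ := by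
  have hexp_rpow (r : ℝ) (X : Ω → ℝ) :
      (fun ω => exp (t * X ω) ^ r) = fun ω => exp (r * t * X ω) := by
    funext ω; rw [← exp_mul]; ring_nf
  have := integral_mul_le_Lp_mul_Lq_of_nonneg hpq (.of_forall fun ω => (exp_pos _).le)
    (.of_forall fun ω => (exp_pos _).le) hξ hη
  simpa only [mgf, Pi.add_apply, one_div, hexp_rpow, ← exp_add, mul_add] using this

noncomputable def evarAt (P : Measure Ω) (α : ℝ) (ξ : Ω → ℝ) (z : ℝ) : ℝ :=
  -(1 / z) * log (mgf ξ P (-z) / α)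

theorem evar_eq_iSup_evarAt : evar P α ξ = ⨆ z : Ioi (0 : ℝ), evarAt P α ξ z := by
  rw [evar, iSup]
  congr 1
  ext y
  simp [evarAt, mgf, eq_comm]

theorem evarAt_eq_inv_mul_sub (hα : 0 < α) (hmgf : 0 < mgf ξ P (-z)) :
    evarAt P α ξ z = z⁻¹ * (log α - log (mgf ξ P (-z))) := by
  rw [evarAt, log_div hmgf.ne' hα.ne']
  ring

theorem evarAt_le_of_ae_le [IsProbabilityMeasure P] (hα : α ∈ Ioc 0 1)
    (hint : Integrable (fun ω => exp (-z * ξ ω)) P) {C : ℝ} (hC : ∀ᵐ ω ∂P, ξ ω ≤ C)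
    (hz : 0 < z) : evarAt P α ξ z ≤ C := by
  have hmgf : exp (-z * C) ≤ mgf ξ P (-z) := by
    simpa only [mgf_const] using mgf_anti_of_nonpos (Y := fun _ => C) hC (by linarith) hint
  have hlog : log α - log (mgf ξ P (-z)) ≤ z * C := by
    have := log_le_log (exp_pos _) hmgf
    rw [log_exp] at this
    linarith [log_nonpos hα.1.le hα.2]
  rw [evarAt_eq_inv_mul_sub hα.1 ((exp_pos _).trans_le hmgf), inv_mul_le_iff₀ hz]
  exact hlog

theorem BddRV.bddAbove_range_evarAt [IsProbabilityMeasure P] (hα : α ∈ Ioc 0 1)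
    (hξ : BddRV P ξ) : BddAbove (range fun z : Ioi (0 : ℝ) => evarAt P α ξ z) := by
  obtain ⟨C, hC⟩ := hξ.2
  refine ⟨C, forall_mem_range.2 fun z => evarAt_le_of_ae_le hα (hξ.integrable_exp_mul _) ?_ z.2⟩
  filter_upwards [hC] with ω hω using (le_abs_self _).trans hω

theorem evar_mono [IsProbabilityMeasure P] (hα : α ∈ Ioc 0 1) (hξ : BddRV P ξ) (hη : BddRV P η)
    (hle : ξ ≤ᵐ[P] η) : evar P α ξ ≤ evar P α η := by
  simp only [evar_eq_iSup_evarAt]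
  refine ciSup_mono (hη.bddAbove_range_evarAt hα) fun z => ?_
  have hz : -(z : ℝ) ≤ 0 := neg_nonpos.2 z.2.le
  refine mul_le_mul_of_nonpos_left ?_ (neg_nonpos.2 (one_div_pos.2 z.2).le)
  refine log_le_log (div_pos (mgf_pos (hη.integrable_exp_mul _)) hα.1) ?_
  exact div_le_div_of_nonneg_right (mgf_anti_of_nonpos hle hz (hξ.integrable_exp_mul _)) hα.1.le

theorem evarAt_add_const (hα : 0 < α) (hmgf : 0 < mgf ξ P (-z)) (hz : 0 < z) (c : ℝ) :
    evarAt P α (fun ω => ξ ω + c) z = evarAt P α ξ z + c := by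
  rw [evarAt, evarAt, mgf_add_const, mul_div_right_comm,
    log_mul (div_pos hmgf hα).ne' (exp_pos _).ne', log_exp]
  field_simp
  ring

theorem evar_add_const [IsProbabilityMeasure P] (hα : α ∈ Ioc 0 1) (hξ : BddRV P ξ) (c : ℝ) :
    evar P α (fun ω => ξ ω + c) = evar P α ξ + c := by
  simp only [evar_eq_iSup_evarAt]
  rw [ciSup_add (hξ.bddAbove_range_evarAt hα)]
  exact iSup_congr fun z =>
    evarAt_add_const hα.1 (mgf_pos (hξ.integrable_exp_mul _)) z.2 c

theorem evarAt_const_mul {t : ℝ} (ht : t ≠ 0) (z : ℝ) :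
    evarAt P α (fun ω => t * ξ ω) z = t * evarAt P α ξ (t * z) := by
  rw [evarAt, evarAt, mgf_const_mul, mul_neg]
  field_simp

theorem evar_const_mul_of_pos {t : ℝ} (ht : 0 < t) :
    evar P α (fun ω => t * ξ ω) = t * evar P α ξ := by
  have hsurj : Function.Surjective fun z : Ioi (0 : ℝ) => (⟨t * z, mul_pos ht z.2⟩ : Ioi (0 : ℝ)) :=
    fun y => ⟨⟨y / t, div_pos y.2 ht⟩, Subtype.ext (mul_div_cancel₀ _ ht.ne')⟩
  simp only [evar_eq_iSup_evarAt, evarAt_const_mul ht.ne', Real.mul_iSup_of_nonneg ht.le]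
  exact hsurj.iSup_comp fun z => t * evarAt P α ξ z

theorem evar_zero : evar P α (fun _ => 0) = 0 := by
  have h := evar_const_mul_of_pos (P := P) (α := α) (ξ := fun _ => 0) two_pos
  simp only [mul_zero] at h
  linarith

theorem evar_const_mul {t : ℝ} (ht : 0 ≤ t) :
    evar P α (fun ω => t * ξ ω) = t * evar P α ξ := by
  rcases ht.eq_or_lt with rfl | ht
  · simpa only [zero_mul] using evar_zero
  · exact evar_const_mul_of_pos ht

theorem evarAt_add_evarAt_le [IsProbabilityMeasure P] (hα : 0 < α) (hξ : BddRV P ξ)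
    (hη : BddRV P η) {z₁ z₂ : ℝ} (hz₁ : 0 < z₁) (hz₂ : 0 < z₂) :
    evarAt P α ξ z₁ + evarAt P α η z₂ ≤ evarAt P α (ξ + η) (z₁⁻¹ + z₂⁻¹)⁻¹ := by
  set z := (z₁⁻¹ + z₂⁻¹)⁻¹
  have hz : 0 < z := by positivity
  have hz_inv : z⁻¹ = z₁⁻¹ + z₂⁻¹ := inv_inv _
  -- Hölder with the exponents `z₁ / z` and `z₂ / z` rescales `-z` to `-z₁` and `-z₂`.
  have hpq : (z₁ / z).HolderConjugate (z₂ / z) := by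
    refine Real.holderConjugate_iff.2 ⟨?_, ?_⟩
    · rw [one_lt_div hz, ← inv_lt_inv₀ hz₁ hz, hz_inv]
      exact lt_add_of_pos_right _ (inv_pos.2 hz₂)
    · rw [inv_div, inv_div, div_eq_mul_inv, div_eq_mul_inv, ← mul_add, ← hz_inv,
        mul_inv_cancel₀ hz.ne']
  have hholder := mgf_add_le_of_holderConjugate hpq (-z) (hξ.memLp_exp_mul _ _)
    (hη.memLp_exp_mul _ _)
  rw [mul_neg, div_mul_cancel₀ _ hz.ne', mul_neg, div_mul_cancel₀ _ hz.ne', inv_div,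
    inv_div] at hholder
  have hA := mgf_pos (hξ.integrable_exp_mul (-z₁))
  have hB := mgf_pos (hη.integrable_exp_mul (-z₂))
  have hE := mgf_pos ((hξ.add hη).integrable_exp_mul (-z))
  have hlog : log (mgf (ξ + η) P (-z)) ≤
      z / z₁ * log (mgf ξ P (-z₁)) + z / z₂ * log (mgf η P (-z₂)) := by
    rw [← log_rpow hA, ← log_rpow hB, ← log_mul (by positivity) (by positivity)]
    exact log_le_log hE hholder
  rw [evarAt_eq_inv_mul_sub hα hA, evarAt_eq_inv_mul_sub hα hB, evarAt_eq_inv_mul_sub hα hE]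
  calc z₁⁻¹ * (log α - log (mgf ξ P (-z₁))) + z₂⁻¹ * (log α - log (mgf η P (-z₂)))
      = z⁻¹ * (log α - (z / z₁ * log (mgf ξ P (-z₁)) + z / z₂ * log (mgf η P (-z₂)))) := by
        linear_combination (-log α) * hz_inv +
          (z₁⁻¹ * log (mgf ξ P (-z₁)) + z₂⁻¹ * log (mgf η P (-z₂))) * inv_mul_cancel₀ hz.ne'
    _ ≤ z⁻¹ * (log α - log (mgf (ξ + η) P (-z))) := by gcongr

theorem evar_add_evar_le [IsProbabilityMeasure P] (hα : α ∈ Ioc 0 1) (hξ : BddRV P ξ)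
    (hη : BddRV P η) : evar P α ξ + evar P α η ≤ evar P α (ξ + η) := by
  simp only [evar_eq_iSup_evarAt]
  refine ciSup_add_ciSup_le fun z₁ z₂ => (evarAt_add_evarAt_le hα.1 hξ hη z₁.2 z₂.2).trans ?_
  exact le_ciSup ((hξ.add hη).bddAbove_range_evarAt hα)
    ⟨_, mem_Ioi.2 <| inv_pos.2 <| add_pos (inv_pos.2 z₁.2) (inv_pos.2 z₂.2)⟩

end Evar

/-- `e_α : L^∞ → ℝ` is a coherent utility function: monotone, translation equivariant,
positively homogeneous and superadditive. -/
theorem evar_coherent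
    {Ω : Type*} [MeasurableSpace Ω] (P : Measure Ω) [IsProbabilityMeasure P]
    (α : ℝ) (hα : α ∈ Set.Ioo (0 : ℝ) 1) :
    (∀ ξ η : Ω → ℝ, BddRV P ξ → BddRV P η → (∀ᵐ ω ∂P, ξ ω ≤ η ω) →
      evar P α ξ ≤ evar P α η) ∧
    (∀ ξ : Ω → ℝ, BddRV P ξ → ∀ c : ℝ,
      evar P α (fun ω => ξ ω + c) = evar P α ξ + c) ∧
    (∀ ξ : Ω → ℝ, BddRV P ξ → ∀ t : ℝ, 0 ≤ t →
      evar P α (fun ω => t * ξ ω) = t * evar P α ξ) ∧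
    (∀ ξ η : Ω → ℝ, BddRV P ξ → BddRV P η →
      evar P α ξ + evar P α η ≤ evar P α (fun ω => ξ ω + η ω)) := by
  have hα' : α ∈ Ioc 0 1 := Ioo_subset_Ioc_self hα
  exact ⟨fun ξ η hξ hη hle => evar_mono hα' hξ hη hle,
    fun ξ hξ c => evar_add_const hα' hξ c,
    fun ξ _ t ht => evar_const_mul ht,
    fun ξ η hξ hη => evar_add_evar_le hα' hξ hη⟩
end

section
/- For every bounded random variable ξ: (i) sup_{z>0} ( -(1/z) log E[exp(-zξ)] ) = E[ξ] (i.e. e_α(ξ) with α = 1 equals the expectation), and (ii) e_α(ξ) → ess inf ξ as α → 0⁺. -/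
/-!
With `K` the cumulant generating function of `ξ`, put `φ z = -K(-z)/z`, so that
`e_α(ξ) = sup_{z>0} (φ z + log α / z)`. Jensen's inequality gives `φ ≤ E[ξ]`, and
`φ z → K'(0) = E[ξ]` as `z → 0⁺`, which is (i). As `z → ∞`, `φ z → ess inf ξ`: from below
because `ξ ≥ ess inf ξ` a.s., from above by the Chernoff bound on `{ξ ≤ c}`, which has positive
probability for every `c > ess inf ξ`. As `α → 0⁺` the penalty `log α / z` makes every `z` below
a fixed threshold irrelevant, so `e_α(ξ) → ess inf ξ`.
-/

open MeasureTheory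

open Filter Topology Set ProbabilityTheory Real

theorem setOf_exists_pos_eq_image (f : ℝ → ℝ) : {y | ∃ z, 0 < z ∧ y = f z} = f '' Ioi 0 := by
  ext
  simp [eq_comm]

theorem csSup_image_eq_of_tendsto {α : Type*} {l : Filter α} [l.NeBot] {s : Set α}
    {φ : α → ℝ} {a : ℝ} (hs : s ∈ l) (hφ : ∀ x ∈ s, φ x ≤ a) (hlim : Tendsto φ l (𝓝 a)) :
    sSup (φ '' s) = a :=
  (isLUB_of_mem_closure (forall_mem_image.2 hφ)
    (mem_closure_of_tendsto hlim (mem_of_superset hs fun _ => mem_image_of_mem φ))).csSup_eq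
    ((Filter.nonempty_of_mem hs).image φ)

theorem tendsto_csSup_image_add_div_atBot {φ : ℝ → ℝ} {m M : ℝ}
    (hφM : ∀ z, 0 < z → φ z ≤ M) (hφ : Tendsto φ atTop (𝓝 m)) :
    Tendsto (fun s => sSup ((fun z => φ z + s / z) '' Ioi 0)) atBot (𝓝 m) := by
  have hbdd : ∀ s ≤ 0, BddAbove ((fun z => φ z + s / z) '' Ioi 0) := by
    refine fun s hs => ⟨M, ?_⟩
    rintro _ ⟨z, hz, rfl⟩
    linarith [hφM z hz, div_nonpos_of_nonpos_of_nonneg hs (le_of_lt hz)]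
  refine tendsto_order.2 ⟨fun a ha => ?_, fun b hb => ?_⟩
  · filter_upwards [eventually_le_atBot 0] with s hs
    have hlim : Tendsto (fun z => φ z + s / z) atTop (𝓝 m) := by
      simpa using hφ.add (tendsto_const_nhds.div_atTop tendsto_id)
    refine ha.trans_le (le_of_tendsto hlim ?_)
    filter_upwards [eventually_gt_atTop 0] with z hz
    exact le_csSup (hbdd s hs) (mem_image_of_mem _ hz)
  · obtain ⟨c, hmc, hcb⟩ := exists_between hb
    obtain ⟨Z, hZ⟩ := eventually_atTop.1 (hφ.eventually (gt_mem_nhds hmc))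
    have hZ' : 0 < max Z 1 := lt_max_of_lt_right one_pos
    filter_upwards [eventually_le_atBot (min 0 ((c - M) * max Z 1))] with s hs
    have hs0 : s ≤ 0 := hs.trans (min_le_left _ _)
    refine lt_of_le_of_lt (csSup_le (nonempty_Ioi.image _) ?_) hcb
    rintro _ ⟨z, hz, rfl⟩
    rcases le_or_gt (max Z 1) z with hzZ | hzZ
    · have := hZ z (le_of_max_le_left hzZ)
      linarith [div_nonpos_of_nonpos_of_nonneg hs0 (le_of_lt hz)]
    · have h1 : s / z ≤ s / max Z 1 := mul_le_mul_of_nonpos_left (inv_anti₀ hz hzZ.le) hs0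
      have h2 : s / max Z 1 ≤ c - M := by
        rw [div_le_iff₀ hZ']
        exact hs.trans (min_le_right _ _)
      linarith [hφM z hz]

namespace ProbabilityTheory

variable {Ω : Type*} [MeasurableSpace Ω] {P : Measure Ω} {ξ : Ω → ℝ} {z C : ℝ}

/-- The certainty equivalent `-log E[exp(-zξ)] / z` of `ξ` under the exponential utility
`x ↦ -exp (-z x)`. -/
noncomputable def certaintyEquiv (ξ : Ω → ℝ) (P : Measure Ω) (z : ℝ) : ℝ := -cgf ξ P (-z) / z

theorem certaintyEquiv_eq_neg_one_div_mul_log (ξ : Ω → ℝ) (P : Measure Ω) (z : ℝ) :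
    certaintyEquiv ξ P z = -(1 / z) * log (∫ ω, exp (-z * ξ ω) ∂P) := by
  rw [certaintyEquiv, cgf, mgf]
  ring

theorem hasDerivAt_cgf_zero [IsProbabilityMeasure P] (h : 0 ∈ interior (integrableExpSet ξ P)) :
    HasDerivAt (cgf ξ P) P[ξ] 0 := by
  simpa [deriv_cgf_zero h] using (analyticAt_cgf h).differentiableAt.hasDerivAt

theorem tendsto_certaintyEquiv_nhdsGT_zero [IsProbabilityMeasure P]
    (h : 0 ∈ interior (integrableExpSet ξ P)) :
    Tendsto (certaintyEquiv ξ P) (𝓝[>] 0) (𝓝 P[ξ]) := by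
  have hneg : HasDerivAt (fun z => cgf ξ P (-z)) (-P[ξ]) 0 := by
    have hd : HasDerivAt (cgf ξ P) P[ξ] (-0) := by simpa using hasDerivAt_cgf_zero h
    exact (hd.comp 0 (hasDerivAt_neg' 0)).congr_deriv (mul_neg_one _)
  have hslope := hneg.tendsto_slope_zero_right.neg
  simp only [zero_add, neg_zero, cgf_zero, sub_zero, smul_eq_mul, neg_neg] at hslope
  refine hslope.congr fun z => ?_
  rw [certaintyEquiv]
  ring

theorem certaintyEquiv_le_integral [IsProbabilityMeasure P] (hξ : Integrable ξ P)
    (hexp : Integrable (fun ω => exp (-z * ξ ω)) P) (hz : 0 < z) :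
    certaintyEquiv ξ P z ≤ P[ξ] := by
  have hjensen : exp (-z * P[ξ]) ≤ mgf ξ P (-z) := by
    simpa [mgf, integral_neg, integral_const_mul] using
      convexOn_exp.map_integral_le continuousOn_exp isClosed_univ (by simp)
        (hξ.const_mul (-z)) hexp
  have hlog : -z * P[ξ] ≤ cgf ξ P (-z) := (le_log_iff_exp_le (mgf_pos hexp)).2 hjensen
  rw [certaintyEquiv, div_le_iff₀ hz]
  linarith

theorem essInf_le_certaintyEquiv [IsProbabilityMeasure P] (hξ : IsBoundedUnder (· ≥ ·) (ae P) ξ)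
    (hexp : Integrable (fun ω => exp (-z * ξ ω)) P) (hz : 0 < z) :
    essInf ξ P ≤ certaintyEquiv ξ P z := by
  have hmgf : mgf ξ P (-z) ≤ exp (-z * essInf ξ P) := by
    simpa [mgf_const] using mgf_anti_of_nonpos (X := fun _ => essInf ξ P) (ae_essInf_le hξ)
      (neg_nonpos.2 hz.le) (integrable_const _)
  have hlog : cgf ξ P (-z) ≤ -z * essInf ξ P := (log_le_iff_le_exp (mgf_pos hexp)).2 hmgf
  rw [certaintyEquiv, le_div_iff₀ hz]
  linarith

theorem measureReal_setOf_le_pos_of_essInf_lt [IsFiniteMeasure P]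
    (hξ : IsCoboundedUnder (· ≥ ·) (ae P) ξ) {c : ℝ} (hc : essInf ξ P < c) :
    0 < P.real {ω | ξ ω ≤ c} := by
  have hfreq : ∃ᵐ ω ∂P, ξ ω ≤ c := (frequently_lt_of_liminf_lt hξ hc).mono fun _ => le_of_lt
  exact ENNReal.toReal_pos (frequently_ae_iff.1 hfreq) (measure_ne_top _ _)

theorem certaintyEquiv_le_sub_log_div [IsFiniteMeasure P]
    (hexp : Integrable (fun ω => exp (-z * ξ ω)) P) (hz : 0 < z) {c : ℝ}
    (hc : 0 < P.real {ω | ξ ω ≤ c}) :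
    certaintyEquiv ξ P z ≤ c - log (P.real {ω | ξ ω ≤ c}) / z := by
  have hchernoff := measure_le_le_exp_cgf c (neg_nonpos.2 hz.le) hexp
  have hlog := (log_le_iff_le_exp hc).2 hchernoff
  rw [certaintyEquiv, div_le_iff₀ hz, sub_mul, div_mul_cancel₀ _ hz.ne']
  linarith

theorem tendsto_certaintyEquiv_atTop [IsProbabilityMeasure P] (hξ : AEMeasurable ξ P)
    (hC : ∀ᵐ ω ∂P, |ξ ω| ≤ C) :
    Tendsto (certaintyEquiv ξ P) atTop (𝓝 (essInf ξ P)) := by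
  have hexp (t : ℝ) : Integrable (fun ω => exp (t * ξ ω)) P :=
    integrable_exp_mul_of_mem_Icc hξ (hC.mono fun _ => abs_le.1)
  have hbelow : IsBoundedUnder (· ≥ ·) (ae P) ξ := ⟨-C, hC.mono fun _ h => (abs_le.1 h).1⟩
  have habove : IsBoundedUnder (· ≤ ·) (ae P) ξ := ⟨C, hC.mono fun _ h => (abs_le.1 h).2⟩
  refine tendsto_order.2 ⟨fun a ha => ?_, fun b hb => ?_⟩
  · filter_upwards [eventually_gt_atTop 0] with z hz
    exact ha.trans_le (essInf_le_certaintyEquiv hbelow (hexp _) hz)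
  · obtain ⟨c, hmc, hcb⟩ := exists_between hb
    have hp := measureReal_setOf_le_pos_of_essInf_lt habove.isCoboundedUnder_ge hmc
    have hlim : Tendsto (fun z => c - log (P.real {ω | ξ ω ≤ c}) / z) atTop (𝓝 c) := by
      simpa using tendsto_const_nhds.sub
        ((tendsto_const_nhds (x := log (P.real {ω | ξ ω ≤ c}))).div_atTop tendsto_id)
    filter_upwards [hlim.eventually (gt_mem_nhds hcb), eventually_gt_atTop 0] with z hzb hz
    exact (certaintyEquiv_le_sub_log_div (hexp _) hz hp).trans_lt hzb

end ProbabilityTheory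

theorem evar_eq_csSup_certaintyEquiv_add_log_div {Ω : Type*} [MeasurableSpace Ω]
    {P : Measure Ω} [IsProbabilityMeasure P] {ξ : Ω → ℝ} {α : ℝ}
    (hexp : ∀ z, Integrable (fun ω => exp (-z * ξ ω)) P) (hα : 0 < α) :
    evar P α ξ = sSup ((fun z => certaintyEquiv ξ P z + log α / z) '' Ioi 0) := by
  have hterm (z : ℝ) : -(1 / z) * log ((∫ ω, exp (-z * ξ ω) ∂P) / α)
      = certaintyEquiv ξ P z + log α / z := by
    have hpos : 0 < ∫ ω, exp (-z * ξ ω) ∂P := mgf_pos (hexp z)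
    rw [certaintyEquiv_eq_neg_one_div_mul_log, log_div hpos.ne' hα.ne']
    ring
  simp only [evar, hterm]
  rw [setOf_exists_pos_eq_image]

/-- Limiting cases of the Entropic Value at Risk: for `α = 1` it equals the expectation,
`sup_{z>0} ( -(1/z) log E[exp(-zξ)] ) = E[ξ]`, and as `α → 0⁺`, `e_α(ξ) → ess inf ξ`. -/
theorem evar_limit_cases
    {Ω : Type*} [MeasurableSpace Ω] (P : Measure Ω) [IsProbabilityMeasure P]
    (ξ : Ω → ℝ) (hmeas : Measurable ξ) (hbdd : ∃ C : ℝ, ∀ᵐ ω ∂P, |ξ ω| ≤ C) :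
    sSup {y : ℝ | ∃ z : ℝ, 0 < z ∧
        y = -(1 / z) * Real.log (∫ ω, Real.exp (-z * ξ ω) ∂P)}
      = ∫ ω, ξ ω ∂P ∧
    Filter.Tendsto (fun α : ℝ => evar P α ξ) (nhdsWithin 0 (Set.Ioi 0))
      (nhds (essInf ξ P)) := by
  obtain ⟨C, hC⟩ := hbdd
  have hexp (t : ℝ) : Integrable (fun ω => exp (t * ξ ω)) P :=
    integrable_exp_mul_of_mem_Icc hmeas.aemeasurable (hC.mono fun _ => abs_le.1)
  have h0 : (0 : ℝ) ∈ interior (integrableExpSet ξ P) := by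
    simp [show integrableExpSet ξ P = univ from eq_univ_of_forall hexp]
  have hφ (z : ℝ) (hz : 0 < z) : certaintyEquiv ξ P z ≤ P[ξ] :=
    certaintyEquiv_le_integral (integrable_of_mem_interior_integrableExpSet h0) (hexp _) hz
  constructor
  · simp only [← certaintyEquiv_eq_neg_one_div_mul_log, setOf_exists_pos_eq_image]
    exact csSup_image_eq_of_tendsto self_mem_nhdsWithin hφ (tendsto_certaintyEquiv_nhdsGT_zero h0)
  · have hlim := (tendsto_csSup_image_add_div_atBot hφ
      (tendsto_certaintyEquiv_atTop hmeas.aemeasurable hC)).comp tendsto_log_nhdsGT_zero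
    refine hlim.congr' ?_
    filter_upwards [self_mem_nhdsWithin] with α hα
    exact (evar_eq_csSup_certaintyEquiv_add_log_div (fun _ => hexp _) hα).symm
end
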